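/- arXiv:1603.03727 — 5 statements merged into one kernel-verified Lean document; each statement's English description precedes it below -/
import Mathlib

section
/- Let 𝓜 be a regular collection of channel sets. If 𝓜 is DF-normal, then every member set of 𝓜 consists exactly of channel pairs; that is, for each member set M of 𝓜 and each channel ch, ch ∈ M if and only if its dual d ch ∈ M. -/
/-- `𝓜` DF-reduces to `𝓜'` via channel `ch`: there are two distinct member
occurrences `M₁`, `M₂` in `𝓜` with `ch ∈ M₁` and `d ch ∈ M₂`, and `𝓜'` is
obtained from `𝓜` by removing `M₁` and `M₂` and adding `(M₁ ∪ M₂) \ {ch, d ch}`. -/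
def DFStepVia {α : Type*} [DecidableEq α] (d : α → α)
    (𝓜 𝓜' : Multiset (Finset α)) (ch : α) : Prop :=
  ∃ M₁ M₂ : Finset α, M₁ ∈ 𝓜 ∧ M₂ ∈ 𝓜.erase M₁ ∧ ch ∈ M₁ ∧ d ch ∈ M₂ ∧
    𝓜' = ((M₁ ∪ M₂) \ {ch, d ch}) ::ₘ ((𝓜.erase M₁).erase M₂)

theorem DFStepVia.card_lt {α : Type*} [DecidableEq α] {d : α → α}
    {𝓜 𝓜' : Multiset (Finset α)} {ch : α}
    (h : DFStepVia d 𝓜 𝓜' ch) : Multiset.card 𝓜' < Multiset.card 𝓜 := by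
  obtain ⟨M₁, M₂, h₁, h₂, -, -, rfl⟩ := h
  have c₁ : Multiset.card (𝓜.erase M₁) < Multiset.card 𝓜 :=
    Multiset.card_erase_lt_of_mem h₁
  have c₂ : Multiset.card ((𝓜.erase M₁).erase M₂) < Multiset.card (𝓜.erase M₁) :=
    Multiset.card_erase_lt_of_mem h₂
  rw [Multiset.card_cons]
  omega

/-- A collection `𝓜` of channel sets is regular if its member sets are pairwise
disjoint and, for every channel `ch`, `ch` belongs to the union of the sets in
`𝓜` iff `d ch` does. -/
def Regular {α : Type*} [DecidableEq α] (d : α → α)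
    (𝓜 : Multiset (Finset α)) : Prop :=
  Multiset.Pairwise (fun M₁ M₂ => Disjoint M₁ M₂) 𝓜 ∧
    ∀ ch : α, ch ∈ 𝓜.sup ↔ d ch ∈ 𝓜.sup

/-- `𝓜` is DF-normal if it DF-reduces to no collection. -/
def DFNormal {α : Type*} [DecidableEq α] (d : α → α)
    (𝓜 : Multiset (Finset α)) : Prop :=
  ¬ ∃ 𝓜' ch, DFStepVia d 𝓜 𝓜' ch

/-- `𝓜` is DF-reducible if either every member set of `𝓜` is empty, or `𝓜` is
not DF-normal and every `𝓜'` to which `𝓜` DF-reduces is DF-reducible. -/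
def DFReducible {α : Type*} [DecidableEq α] (d : α → α)
    (𝓜 : Multiset (Finset α)) : Prop :=
  (∀ M ∈ 𝓜, M = ∅) ∨
    ((∃ 𝓜' ch, DFStepVia d 𝓜 𝓜' ch) ∧
      ∀ 𝓜' ch (h : DFStepVia d 𝓜 𝓜' ch), DFReducible d 𝓜')
termination_by Multiset.card 𝓜
decreasing_by exact h.card_lt

/-- If a regular collection `𝓜` is DF-normal, then each member set of `𝓜`
consists exactly of channel pairs: `ch ∈ M` iff `d ch ∈ M`. -/
theorem DFNormal.mem_iff_dual_mem {α : Type*} [DecidableEq α] (d : α → α)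
    (hinv : Function.Involutive d) (hfpf : ∀ ch : α, d ch ≠ ch)
    (𝓜 : Multiset (Finset α)) (hne : 𝓜 ≠ 0)
    (hreg : Regular d 𝓜) (hnorm : DFNormal d 𝓜) :
    ∀ M ∈ 𝓜, ∀ ch : α, ch ∈ M ↔ d ch ∈ M := by
  have msup : ∀ (s : Multiset (Finset α)) (a : α), a ∈ s.sup ↔ ∃ M ∈ s, a ∈ M := by
    intro s a
    induction s using Multiset.induction with
    | empty => simp
    | cons b s ih => simp [Multiset.sup_cons, ih]
  have key : ∀ M ∈ 𝓜, ∀ ch : α, ch ∈ M → d ch ∈ M := by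
    intro M hM ch hch
    have hsup : ch ∈ 𝓜.sup := (msup 𝓜 ch).mpr ⟨M, hM, hch⟩
    have hdsup : d ch ∈ 𝓜.sup := (hreg.2 ch).mp hsup
    obtain ⟨M₂, hM₂, hd⟩ := (msup 𝓜 (d ch)).mp hdsup
    by_cases hMM : M₂ = M
    · exact hMM ▸ hd
    · exact absurd ⟨_, ch, M, M₂, hM, (Multiset.mem_erase_of_ne hMM).mpr hM₂,
        hch, hd, rfl⟩ hnorm
  intro M hM ch
  constructor
  · exact key M hM ch
  · intro h
    have := key M hM (d ch) h
    rwa [hinv ch] at this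
end

section
/- Let 𝓜 be a regular collection of channel sets. If some member set M of 𝓜 is self-looping (i.e., contains both ch and d ch for some channel ch), then 𝓜 is not DF-reducible. -/
theorem Multiset.pairwise_cons {β : Type*} {r : β → β → Prop} [Std.Symm r] {a : β}
    {s : Multiset β} : Multiset.Pairwise r (a ::ₘ s) ↔ (∀ b ∈ s, r a b) ∧ s.Pairwise r := by
  induction s using Quotient.inductionOn with
  | h l =>
    change Multiset.Pairwise r ↑(a :: l) ↔ (∀ b ∈ (l : Multiset β), r a b) ∧ Multiset.Pairwise r ↑l
    rw [Multiset.pairwise_coe_iff_pairwise, Multiset.pairwise_coe_iff_pairwise, List.pairwise_cons]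
    simp only [Multiset.mem_coe]

def SelfLooping {α : Type*} (d : α → α) (M : Finset α) : Prop :=
  ∃ ch, ch ∈ M ∧ d ch ∈ M

section DFReduction

variable {α : Type*} [DecidableEq α] {d : α → α}

theorem DFStepVia.exists_eq_cons {𝓜 𝓜' : Multiset (Finset α)} {ch : α}
    (h : DFStepVia d 𝓜 𝓜' ch) :
    ∃ M₁ M₂ 𝓡, 𝓜 = M₁ ::ₘ M₂ ::ₘ 𝓡 ∧ ch ∈ M₁ ∧ d ch ∈ M₂ ∧
      𝓜' = ((M₁ ∪ M₂) \ {ch, d ch}) ::ₘ 𝓡 := by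
  obtain ⟨M₁, M₂, h₁, h₂, hch, hdch, rfl⟩ := h
  exact ⟨M₁, M₂, _, by rw [Multiset.cons_erase h₂, Multiset.cons_erase h₁], hch, hdch, rfl⟩

theorem DFStepVia.pairwise_disjoint {𝓜 𝓜' : Multiset (Finset α)} {ch : α}
    (h : DFStepVia d 𝓜 𝓜' ch) (hdisj : 𝓜.Pairwise Disjoint) : 𝓜'.Pairwise Disjoint := by
  obtain ⟨M₁, M₂, 𝓡, rfl, -, -, rfl⟩ := h.exists_eq_cons
  obtain ⟨hM₁, hM₂, h𝓡⟩ : (∀ N ∈ M₂ ::ₘ 𝓡, Disjoint M₁ N) ∧ (∀ N ∈ 𝓡, Disjoint M₂ N) ∧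
      𝓡.Pairwise Disjoint := by
    simpa only [Multiset.pairwise_cons] using hdisj
  refine Multiset.pairwise_cons.2 ⟨fun N hN => ?_, h𝓡⟩
  exact (Finset.disjoint_union_left.2 ⟨hM₁ N (Multiset.mem_cons_of_mem hN), hM₂ N hN⟩).mono_left
    Finset.sdiff_subset

theorem SelfLooping.sdiff_of_disjoint (hinv : Function.Involutive d) {M₁ M₂ : Finset α}
    (hM₁ : SelfLooping d M₁) (hdisj : Disjoint M₁ M₂) {ch : α} (hch : ch ∈ M₁)
    (hdch : d ch ∈ M₂) : SelfLooping d ((M₁ ∪ M₂) \ {ch, d ch}) := by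
  obtain ⟨c, hc, hdc⟩ := hM₁
  -- neither endpoint of a loop inside `M₁` can be `ch` or `d ch`, as `d ch` lies in `M₂`
  have survives : ∀ x ∈ M₁, d x ∈ M₁ → x ∈ (M₁ ∪ M₂) \ {ch, d ch} := by
    intro x hx hdx
    simp only [Finset.mem_sdiff, Finset.mem_union, Finset.mem_insert, Finset.mem_singleton]
    refine ⟨Or.inl hx, ?_⟩
    rintro (rfl | rfl)
    · exact Finset.disjoint_left.1 hdisj hdx hdch
    · exact Finset.disjoint_left.1 hdisj hx hdch
  exact ⟨c, survives c hc hdc, survives (d c) hdc (by rwa [hinv])⟩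

theorem DFStepVia.exists_selfLooping (hinv : Function.Involutive d)
    {𝓜 𝓜' : Multiset (Finset α)} {ch : α} (h : DFStepVia d 𝓜 𝓜' ch)
    (hdisj : 𝓜.Pairwise Disjoint) {M : Finset α} (hM : M ∈ 𝓜) (hself : SelfLooping d M) :
    ∃ M' ∈ 𝓜', SelfLooping d M' := by
  obtain ⟨M₁, M₂, 𝓡, rfl, hch, hdch, rfl⟩ := h.exists_eq_cons
  have h₁₂ : Disjoint M₁ M₂ :=
    (Multiset.pairwise_cons.1 hdisj).1 M₂ (Multiset.mem_cons_self _ _)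
  rcases Multiset.mem_cons.1 hM with rfl | hM
  · exact ⟨_, Multiset.mem_cons_self _ _, hself.sdiff_of_disjoint hinv h₁₂ hch hdch⟩
  rcases Multiset.mem_cons.1 hM with rfl | hM
  · -- the same merge, read as a step via `d ch` from `M` into `M₁`
    have hmerge : (M₁ ∪ M) \ {ch, d ch} = (M ∪ M₁) \ {d ch, d (d ch)} := by
      rw [Finset.union_comm, hinv, Finset.pair_comm]
    refine ⟨_, Multiset.mem_cons_self _ _, hmerge ▸ ?_⟩
    exact hself.sdiff_of_disjoint hinv h₁₂.symm hdch (by rwa [hinv])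
  · exact ⟨M, Multiset.mem_cons_of_mem hM, hself⟩

theorem not_dfReducible_of_pairwise_disjoint (hinv : Function.Involutive d)
    {𝓜 : Multiset (Finset α)} (hdisj : 𝓜.Pairwise Disjoint) {M : Finset α} (hM : M ∈ 𝓜)
    (hself : SelfLooping d M) : ¬ DFReducible d 𝓜 := by
  rw [DFReducible]
  rintro (hempty | ⟨⟨𝓜', ch, hstep⟩, hnext⟩)
  · obtain ⟨c, hc, -⟩ := hself
    simp [hempty M hM] at hc
  · obtain ⟨M', hM', hself'⟩ := hstep.exists_selfLooping hinv hdisj hM hself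
    exact not_dfReducible_of_pairwise_disjoint hinv (hstep.pairwise_disjoint hdisj) hM' hself'
      (hnext 𝓜' ch hstep)
termination_by Multiset.card 𝓜
decreasing_by exact hstep.card_lt

end DFReduction

theorem not_DFReducible_of_selfLooping_general {α : Type*} [DecidableEq α] (d : α → α)
    (hinv : Function.Involutive d)
    (𝓜 : Multiset (Finset α)) (hreg : Regular d 𝓜)
    (M : Finset α) (hM : M ∈ 𝓜)
    (hself : ∃ ch : α, ch ∈ M ∧ d ch ∈ M) :
    ¬ DFReducible d 𝓜 :=
  not_dfReducible_of_pairwise_disjoint hinv hreg.1 hM hself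

/-- A regular collection containing a self-looping member set is not
DF-reducible. -/
theorem not_DFReducible_of_selfLooping {α : Type*} [DecidableEq α] (d : α → α)
    (hinv : Function.Involutive d) (hfpf : ∀ ch : α, d ch ≠ ch)
    (𝓜 : Multiset (Finset α)) (hne : 𝓜 ≠ 0) (hreg : Regular d 𝓜)
    (M : Finset α) (hM : M ∈ 𝓜)
    (hself : ∃ ch : α, ch ∈ M ∧ d ch ∈ M) :
    ¬ DFReducible d 𝓜 :=
  not_DFReducible_of_selfLooping_general d hinv 𝓜 hreg M hM hself
end

section
/- Let 𝓜 be a regular collection of channel sets that is DF-reducible, and let 𝓜' be the collection obtained from 𝓜 by removing all occurrences of the empty set, assuming 𝓜' is still nonempty. Then 𝓜' is also DF-reducible. -/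


private lemma filter_erase_comm {β : Type*} [DecidableEq β] (p : β → Prop) [DecidablePred p]
    (s : Multiset β) (a : β) (ha : p a) :
    (s.erase a).filter p = (s.filter p).erase a := by
  ext b
  by_cases hb : b = a
  · subst hb
    rw [Multiset.count_erase_self, Multiset.count_filter, Multiset.count_filter,
      Multiset.count_erase_self, if_pos ha, if_pos ha]
  · rw [Multiset.count_erase_of_ne hb, Multiset.count_filter, Multiset.count_filter,
      Multiset.count_erase_of_ne hb]

private lemma key {α : Type*} [DecidableEq α] (d : α → α) :
    ∀ n (𝓜 𝓝 : Multiset (Finset α)),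
      Multiset.card (𝓜.filter (fun M => M ≠ ∅)) ≤ n →
      𝓜.filter (fun M => M ≠ ∅) = 𝓝.filter (fun M => M ≠ ∅) →
      DFReducible d 𝓜 → DFReducible d 𝓝 := by
  intro n
  induction n with
  | zero =>
    intro 𝓜 𝓝 hcard hf hred
    rw [DFReducible]
    left
    intro M hM
    by_contra hMne
    have h1 : M ∈ 𝓝.filter (fun M => M ≠ ∅) := Multiset.mem_filter.2 ⟨hM, hMne⟩
    rw [← hf] at h1
    have h2 := Multiset.card_pos_iff_exists_mem.2 ⟨M, h1⟩
    omega
  | succ n ih =>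
    intro 𝓜 𝓝 hcard hf hred
    have hcount : ∀ M : Finset α, M ≠ ∅ → 𝓜.count M = 𝓝.count M := by
      intro M hM
      have h1 := Multiset.count_filter (p := fun M => M ≠ ∅) (a := M) (s := 𝓜)
      have h2 := Multiset.count_filter (p := fun M => M ≠ ∅) (a := M) (s := 𝓝)
      rw [if_pos hM] at h1 h2
      rw [← h1, ← h2, hf]
    rw [DFReducible] at hred
    rcases hred with hall | ⟨⟨𝓜₀, ch, hstep⟩, hrec⟩
    · rw [DFReducible]
      left
      intro M hM
      by_contra hMne
      have hMf : M ∈ 𝓝.filter (fun M => M ≠ ∅) := Multiset.mem_filter.2 ⟨hM, hMne⟩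
      rw [← hf] at hMf
      exact hMne (hall M (Multiset.mem_filter.1 hMf).1)
    · -- transfer memberships
      have mem_transfer : ∀ (M₁ M₂ : Finset α), M₁ ≠ ∅ → M₂ ≠ ∅ →
          M₁ ∈ 𝓜 → M₂ ∈ 𝓜.erase M₁ → M₁ ∈ 𝓝 ∧ M₂ ∈ 𝓝.erase M₁ := by
        intro M₁ M₂ h1 h2 hm1 hm2
        have c1 : 0 < 𝓜.count M₁ := Multiset.count_pos.2 hm1
        have c2 : 0 < (𝓜.erase M₁).count M₂ := Multiset.count_pos.2 hm2
        constructor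
        · exact Multiset.count_pos.1 (by rw [← hcount M₁ h1]; exact c1)
        · apply Multiset.count_pos.1
          by_cases h : M₂ = M₁
          · subst h
            rw [Multiset.count_erase_self] at c2 ⊢
            rw [← hcount M₂ h2]; exact c2
          · rw [Multiset.count_erase_of_ne h] at c2 ⊢
            rw [← hcount M₂ h2]; exact c2
      rw [DFReducible]
      right
      obtain ⟨M₁, M₂, hm1, hm2, hc1, hc2, _⟩ := hstep
      have hM1ne : M₁ ≠ ∅ := Finset.ne_empty_of_mem hc1
      have hM2ne : M₂ ≠ ∅ := Finset.ne_empty_of_mem hc2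
      obtain ⟨hn1, hn2⟩ := mem_transfer M₁ M₂ hM1ne hM2ne hm1 hm2
      constructor
      · exact ⟨_, ch, M₁, M₂, hn1, hn2, hc1, hc2, rfl⟩
      · intro 𝓝' ch' hstep'
        obtain ⟨N₁, N₂, hn1', hn2', hc1', hc2', rfl⟩ := hstep'
        have hN1ne : N₁ ≠ ∅ := Finset.ne_empty_of_mem hc1'
        have hN2ne : N₂ ≠ ∅ := Finset.ne_empty_of_mem hc2'
        have hcount' : ∀ M : Finset α, M ≠ ∅ → 𝓝.count M = 𝓜.count M :=
          fun M hM => (hcount M hM).symm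
        have mem_transfer' : N₁ ∈ 𝓜 ∧ N₂ ∈ 𝓜.erase N₁ := by
          have c1 : 0 < 𝓝.count N₁ := Multiset.count_pos.2 hn1'
          have c2 : 0 < (𝓝.erase N₁).count N₂ := Multiset.count_pos.2 hn2'
          constructor
          · exact Multiset.count_pos.1 (by rw [hcount N₁ hN1ne]; exact c1)
          · apply Multiset.count_pos.1
            by_cases h : N₂ = N₁
            · subst h
              rw [Multiset.count_erase_self] at c2 ⊢
              rw [hcount N₂ hN2ne]; exact c2
            · rw [Multiset.count_erase_of_ne h] at c2 ⊢
              rw [hcount N₂ hN2ne]; exact c2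
        obtain ⟨hm1', hm2'⟩ := mem_transfer'
        set Nnew := (N₁ ∪ N₂) \ {ch', d ch'} with hNnew
        have hstepM : DFStepVia d 𝓜 (Nnew ::ₘ (𝓜.erase N₁).erase N₂) ch' :=
          ⟨N₁, N₂, hm1', hm2', hc1', hc2', rfl⟩
        have hredM' := hrec _ _ hstepM
        -- filter equality between the two results
        have hfe : ((Nnew ::ₘ (𝓜.erase N₁).erase N₂).filter (fun M => M ≠ ∅)) =
            ((Nnew ::ₘ (𝓝.erase N₁).erase N₂).filter (fun M => M ≠ ∅)) := by
          rw [Multiset.filter_cons, Multiset.filter_cons,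
            filter_erase_comm (fun M => M ≠ ∅) (𝓜.erase N₁) N₂ hN2ne,
            filter_erase_comm (fun M => M ≠ ∅) 𝓜 N₁ hN1ne,
            filter_erase_comm (fun M => M ≠ ∅) (𝓝.erase N₁) N₂ hN2ne,
            filter_erase_comm (fun M => M ≠ ∅) 𝓝 N₁ hN1ne, hf]
        -- card bound
        have hmem_f1 : N₁ ∈ 𝓜.filter (fun M => M ≠ ∅) := Multiset.mem_filter.2 ⟨hm1', hN1ne⟩
        have hmem_f2 : N₂ ∈ (𝓜.filter (fun M => M ≠ ∅)).erase N₁ := by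
          rw [← filter_erase_comm (fun M => M ≠ ∅) 𝓜 N₁ hN1ne]
          exact Multiset.mem_filter.2 ⟨hm2', hN2ne⟩
        have hcard1 := Multiset.card_erase_lt_of_mem hmem_f1
        have hcard2 := Multiset.card_erase_lt_of_mem hmem_f2
        have hcardnew : Multiset.card
            ((Nnew ::ₘ (𝓜.erase N₁).erase N₂).filter (fun M => M ≠ ∅)) ≤ n := by
          rw [Multiset.filter_cons, Multiset.card_add,
            filter_erase_comm (fun M => M ≠ ∅) (𝓜.erase N₁) N₂ hN2ne,
            filter_erase_comm (fun M => M ≠ ∅) 𝓜 N₁ hN1ne]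
          have : Multiset.card (if Nnew ≠ ∅ then {Nnew} else 0) ≤ 1 := by
            split <;> simp
          omega
        exact ih _ _ hcardnew hfe hredM'


/-- If a regular collection `𝓜` is DF-reducible, then the collection obtained
by removing all occurrences of the empty set (assumed still nonempty) is also
DF-reducible. -/
theorem DFReducible.filter_ne_empty {α : Type*} [DecidableEq α] (d : α → α)
    (hinv : Function.Involutive d) (hfpf : ∀ ch : α, d ch ≠ ch)
    (𝓜 : Multiset (Finset α)) (hne : 𝓜 ≠ 0)
    (hreg : Regular d 𝓜) (hred : DFReducible d 𝓜)
    (hne' : 𝓜.filter (fun M => M ≠ ∅) ≠ 0) :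
    DFReducible d (𝓜.filter (fun M => M ≠ ∅)) := by
  apply key d (Multiset.card (𝓜.filter (fun M => M ≠ ∅))) 𝓜 _ le_rfl _ hred
  exact (Multiset.filter_eq_self.2 (fun M hM => (Multiset.mem_filter.1 hM).2)).symm
end

section
/- Let 𝓜 be a regular collection of channel sets. If 𝓜 DF-reduces to some collection 𝓜' and 𝓜' is DF-reducible, then 𝓜 itself is DF-reducible. -/
namespace DFAux
variable {α : Type*} [DecidableEq α]

lemma pairwise_cons_iff {r : α → α → Prop} (hr : Symmetric r) {a : α} {s : Multiset α} :
    Multiset.Pairwise r (a ::ₘ s) ↔ (∀ b ∈ s, r a b) ∧ Multiset.Pairwise r s := by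
  constructor
  · rintro ⟨l, hl, hp⟩
    have ha : a ∈ l := by
      have h := Multiset.mem_cons_self a s
      rw [hl] at h; exact_mod_cast h
    have hperm : l.Perm (a :: l.erase a) := List.perm_cons_erase ha
    have hp' : (a :: l.erase a).Pairwise r := (hperm.pairwise_iff (fun h => hr h)).1 hp
    rw [List.pairwise_cons] at hp'
    have hs : s = (↑(l.erase a) : Multiset α) := by
      have h1 : s = (a ::ₘ s).erase a := (Multiset.erase_cons_head a s).symm
      rw [h1, hl, ← Multiset.coe_erase]
    constructor
    · intro b hb
      exact hp'.1 b (by rw [hs] at hb; exact_mod_cast hb)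
    · exact ⟨l.erase a, hs, hp'.2⟩
  · rintro ⟨h1, l, hl, hp⟩
    refine ⟨a :: l, by rw [hl]; rfl, List.pairwise_cons.2 ⟨fun b hb => h1 b ?_, hp⟩⟩
    rw [hl]; exact_mod_cast hb

lemma pairwise_iff_forall {r : α → α → Prop} (hr : Symmetric r) {s : Multiset α} :
    Multiset.Pairwise r s ↔ ∀ a ∈ s, ∀ b ∈ s.erase a, r a b := by
  induction s using Multiset.induction_on with
  | empty => simp [Multiset.pairwise_zero]
  | cons a s ih =>
    rw [pairwise_cons_iff hr, ih]
    constructor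
    · rintro ⟨h1, h2⟩ x hx y hy
      rcases Multiset.mem_cons.1 hx with h0 | hx2
      · subst h0; rw [Multiset.erase_cons_head] at hy; exact h1 y hy
      · by_cases hxa : x = a
        · subst hxa; rw [Multiset.erase_cons_head] at hy; exact h1 y hy
        · rw [Multiset.erase_cons_tail s (fun h => hxa h.symm)] at hy
          rcases Multiset.mem_cons.1 hy with h | hy2
          · subst h; exact hr (h1 x hx2)
          · exact h2 x hx2 y hy2
    · intro h
      refine ⟨fun b hb => h a (Multiset.mem_cons_self a s) b
        (by rw [Multiset.erase_cons_head]; exact hb), fun x hx y hy => ?_⟩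
      by_cases hxa : x = a
      · subst hxa
        exact h x (Multiset.mem_cons_self x s) y
          (by rw [Multiset.erase_cons_head]
              exact Multiset.mem_of_le (Multiset.erase_le x s) hy)
      · exact h x (Multiset.mem_cons_of_mem hx) y
          (by rw [Multiset.erase_cons_tail s (fun h => hxa h.symm)]
              exact Multiset.mem_cons_of_mem hy)

lemma pairwise_erase {r : α → α → Prop} (hr : Symmetric r) {s : Multiset α}
    (h : Multiset.Pairwise r s) (a : α) : Multiset.Pairwise r (s.erase a) := by
  by_cases ha : a ∈ s
  · rw [← Multiset.cons_erase ha] at h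
    exact (pairwise_cons_iff hr).1 h |>.2
  · rwa [Multiset.erase_of_notMem ha]

lemma mem_msup {x : α} {s : Multiset (Finset α)} : x ∈ s.sup ↔ ∃ M ∈ s, x ∈ M := by
  induction s using Multiset.induction_on with
  | empty => simp [Multiset.sup_zero]
  | cons a s ih =>
    simp only [Multiset.sup_cons, Finset.sup_eq_union, Finset.mem_union, ih, Multiset.mem_cons]
    constructor
    · rintro (h | ⟨M, hM, hxM⟩)
      · exact ⟨a, Or.inl rfl, h⟩
      · exact ⟨M, Or.inr hM, hxM⟩
    · rintro ⟨M, (rfl | hM), hxM⟩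
      · exact Or.inl hxM
      · exact Or.inr ⟨M, hM, hxM⟩

variable {d : α → α}

lemma core3 {𝓜 : Multiset (Finset α)} {A B C : Finset α} {x z : α}
    (hd : ∀ A ∈ 𝓜, ∀ B ∈ 𝓜.erase A, Disjoint A B)
    (hA : A ∈ 𝓜) (hB : B ∈ 𝓜.erase A) (hC : C ∈ (𝓜.erase A).erase B)
    (hx : x ∈ A) (hy : d x ∈ B) (hz : z ∈ A) (hw : d z ∈ C) :
    ∃ 𝓝 : Multiset (Finset α),
      DFStepVia d (((A ∪ B) \ {x, d x}) ::ₘ (𝓜.erase A).erase B) 𝓝 z ∧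
      DFStepVia d (((A ∪ C) \ {z, d z}) ::ₘ (𝓜.erase A).erase C) 𝓝 x := by
  have hB' : B ∈ 𝓜 := Multiset.mem_of_mem_erase hB
  have hC₁ : C ∈ 𝓜.erase A := Multiset.mem_of_le (Multiset.erase_le _ _) hC
  have hC₂ : C ∈ 𝓜.erase B := by
    rw [Multiset.erase_comm] at hC
    exact Multiset.mem_of_le (Multiset.erase_le _ _) hC
  have hAB : Disjoint A B := hd A hA B hB
  have hAC : Disjoint A C := hd A hA C hC₁
  have hBC : Disjoint B C := hd B hB' C hC₂
  have hzx : z ≠ x := by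
    rintro rfl
    exact Finset.disjoint_left.1 hBC hy hw
  have hBneC : B ≠ C := by
    rintro rfl
    exact Finset.disjoint_left.1 hBC hy hy
  set KP : Finset α := (A ∪ B) \ {x, d x} with hKP
  set KQ : Finset α := (A ∪ C) \ {z, d z} with hKQ
  have hzKP : z ∈ KP := by
    rw [hKP]
    refine Finset.mem_sdiff.2 ⟨Finset.mem_union_left _ hz, ?_⟩
    simp only [Finset.mem_insert, Finset.mem_singleton, not_or]
    exact ⟨hzx, fun h => Finset.disjoint_left.1 hAB (h ▸ hz) hy⟩
  have hxKQ : x ∈ KQ := by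
    rw [hKQ]
    refine Finset.mem_sdiff.2 ⟨Finset.mem_union_left _ hx, ?_⟩
    simp only [Finset.mem_insert, Finset.mem_singleton, not_or]
    exact ⟨fun h => hzx h.symm, fun h => Finset.disjoint_left.1 hAC (h ▸ hx) hw⟩
  refine ⟨((KP ∪ C) \ {z, d z}) ::ₘ ((𝓜.erase A).erase B).erase C, ?_, ?_⟩
  · refine ⟨KP, C, Multiset.mem_cons_self _ _, ?_, hzKP, hw, ?_⟩
    · rw [Multiset.erase_cons_head]; exact hC
    · rw [Multiset.erase_cons_head]
  · refine ⟨KQ, B, Multiset.mem_cons_self _ _, ?_, hxKQ, hy, ?_⟩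
    · rw [Multiset.erase_cons_head]
      exact (Multiset.mem_erase_of_ne hBneC).2 hB
    · rw [Multiset.erase_cons_head]
      congr 1
      · -- head sets equal
        ext a
        have f1 : a ∈ C → a ≠ x := fun h e => Finset.disjoint_left.1 hAC (e ▸ hx) h
        have f2 : a ∈ C → a ≠ d x := fun h e => Finset.disjoint_left.1 hBC (e ▸ hy) h
        have f3 : a ∈ B → a ≠ z := fun h e => Finset.disjoint_left.1 hAB (e ▸ hz) h
        have f4 : a ∈ B → a ≠ d z := fun h e => Finset.disjoint_left.1 hBC h (e ▸ hw)
        simp only [hKP, hKQ, Finset.mem_sdiff, Finset.mem_union, Finset.mem_insert,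
          Finset.mem_singleton, not_or]
        constructor
        · rintro ⟨(⟨(h|h), hx1, hx2⟩ | h), hz1, hz2⟩
          · exact ⟨Or.inl ⟨Or.inl h, hz1, hz2⟩, hx1, hx2⟩
          · exact ⟨Or.inr h, hx1, hx2⟩
          · exact ⟨Or.inl ⟨Or.inr h, hz1, hz2⟩, f1 h, f2 h⟩
        · rintro ⟨(⟨(h|h), hz1, hz2⟩ | h), hx1, hx2⟩
          · exact ⟨Or.inl ⟨Or.inl h, hx1, hx2⟩, hz1, hz2⟩
          · exact ⟨Or.inr h, hz1, hz2⟩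
          · exact ⟨Or.inl ⟨Or.inr h, hx1, hx2⟩, f3 h, f4 h⟩
      · exact Multiset.erase_comm _ _ _

lemma core4 {𝓜 : Multiset (Finset α)} {A B C D : Finset α} {x z : α}
    (hd : ∀ A ∈ 𝓜, ∀ B ∈ 𝓜.erase A, Disjoint A B)
    (hA : A ∈ 𝓜) (hB : B ∈ 𝓜.erase A) (hC : C ∈ (𝓜.erase A).erase B)
    (hD : D ∈ ((𝓜.erase A).erase B).erase C)
    (hx : x ∈ A) (hy : d x ∈ B) (hz : z ∈ C) (hw : d z ∈ D) :
    ∃ 𝓝 : Multiset (Finset α),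
      DFStepVia d (((A ∪ B) \ {x, d x}) ::ₘ (𝓜.erase A).erase B) 𝓝 z ∧
      DFStepVia d (((C ∪ D) \ {z, d z}) ::ₘ (𝓜.erase C).erase D) 𝓝 x := by
  have hB' : B ∈ 𝓜 := Multiset.mem_of_mem_erase hB
  have hC₁ : C ∈ 𝓜.erase A := Multiset.mem_of_le (Multiset.erase_le _ _) hC
  have hC' : C ∈ 𝓜 := Multiset.mem_of_mem_erase hC₁
  have hC₂ : C ∈ 𝓜.erase B := by
    rw [Multiset.erase_comm] at hC
    exact Multiset.mem_of_le (Multiset.erase_le _ _) hC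
  have hD₁ : D ∈ ((𝓜.erase A).erase B) := Multiset.mem_of_le (Multiset.erase_le _ _) hD
  have hD₂ : D ∈ 𝓜.erase A := Multiset.mem_of_le (Multiset.erase_le _ _) hD₁
  have hD' : D ∈ 𝓜 := Multiset.mem_of_mem_erase hD₂
  have hDB : D ∈ 𝓜.erase B := by
    rw [Multiset.erase_comm] at hD₁
    exact Multiset.mem_of_le (Multiset.erase_le _ _) hD₁
  have hDC : D ∈ 𝓜.erase C := by
    rw [Multiset.erase_comm (𝓜.erase A) B C, Multiset.erase_comm 𝓜 A C] at hD
    exact Multiset.mem_of_le (Multiset.erase_le _ _)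
      (Multiset.mem_of_le (Multiset.erase_le _ _) hD)
  have hAB : Disjoint A B := hd A hA B hB
  have hAC : Disjoint A C := hd A hA C hC₁
  have hBC : Disjoint B C := hd B hB' C hC₂
  have hAD : Disjoint A D := hd A hA D hD₂
  have hBD : Disjoint B D := hd B hB' D hDB
  have hCD : Disjoint C D := hd C hC' D hDC
  set KP : Finset α := (A ∪ B) \ {x, d x} with hKP
  set KQ : Finset α := (C ∪ D) \ {z, d z} with hKQ
  have hKPC : KP ≠ C := by
    intro e
    have : z ∈ KP := e ▸ hz
    rcases Finset.mem_union.1 (Finset.mem_sdiff.1 this).1 with h | h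
    · exact Finset.disjoint_left.1 hAC h hz
    · exact Finset.disjoint_left.1 hBC h hz
  have hKPD : KP ≠ D := by
    intro e
    have : d z ∈ KP := e ▸ hw
    rcases Finset.mem_union.1 (Finset.mem_sdiff.1 this).1 with h | h
    · exact Finset.disjoint_left.1 hAD h hw
    · exact Finset.disjoint_left.1 hBD h hw
  have hKQA : KQ ≠ A := by
    intro e
    have : x ∈ KQ := e ▸ hx
    rcases Finset.mem_union.1 (Finset.mem_sdiff.1 this).1 with h | h
    · exact Finset.disjoint_left.1 hAC hx h
    · exact Finset.disjoint_left.1 hAD hx h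
  have hKQB : KQ ≠ B := by
    intro e
    have : d x ∈ KQ := e ▸ hy
    rcases Finset.mem_union.1 (Finset.mem_sdiff.1 this).1 with h | h
    · exact Finset.disjoint_left.1 hBC hy h
    · exact Finset.disjoint_left.1 hBD hy h
  have hAneC : A ≠ C := fun e => Finset.disjoint_left.1 hAC hx (e ▸ hx)
  have hAneD : A ≠ D := fun e => Finset.disjoint_left.1 hAD hx (e ▸ hx)
  have hBneC : B ≠ C := fun e => Finset.disjoint_left.1 hBC hy (e ▸ hy)
  have hBneD : B ≠ D := fun e => Finset.disjoint_left.1 hBD hy (e ▸ hy)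
  refine ⟨KQ ::ₘ KP ::ₘ (((𝓜.erase A).erase B).erase C).erase D, ?_, ?_⟩
  · refine ⟨C, D, Multiset.mem_cons_of_mem hC, ?_, hz, hw, ?_⟩
    · rw [Multiset.erase_cons_tail _ hKPC]
      exact Multiset.mem_cons_of_mem hD
    · rw [Multiset.erase_cons_tail _ hKPC, Multiset.erase_cons_tail _ hKPD]
  · refine ⟨A, B, ?_, ?_, hx, hy, ?_⟩
    · refine Multiset.mem_cons_of_mem ?_
      exact (Multiset.mem_erase_of_ne hAneD).2 ((Multiset.mem_erase_of_ne hAneC).2 hA)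
    · rw [Multiset.erase_cons_tail _ hKQA]
      refine Multiset.mem_cons_of_mem ?_
      have h1 : B ∈ (𝓜.erase A).erase C := (Multiset.mem_erase_of_ne hBneC).2 hB
      have h2 : B ∈ ((𝓜.erase A).erase C).erase D := (Multiset.mem_erase_of_ne hBneD).2 h1
      rw [Multiset.erase_comm 𝓜 A C, Multiset.erase_comm _ A D] at h2
      exact h2
    · rw [Multiset.erase_cons_tail _ hKQA, Multiset.erase_cons_tail _ hKQB,
        Multiset.cons_swap]
      congr 2
      rw [Multiset.erase_comm (𝓜.erase A) B C, Multiset.erase_comm 𝓜 A C,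
        Multiset.erase_comm ((𝓜.erase C).erase A) B D, Multiset.erase_comm (𝓜.erase C) A D]



def HasLoop (d : α → α) (𝓜 : Multiset (Finset α)) : Prop :=
  ∃ c M, M ∈ 𝓜 ∧ c ∈ M ∧ d c ∈ M

lemma disjSymm : Symmetric (fun M₁ M₂ : Finset α => Disjoint M₁ M₂) :=
  fun _ _ h => h.symm

lemma step_regular (hinv : Function.Involutive d) {𝓜 𝓜' : Multiset (Finset α)} {ch : α}
    (hreg : Regular d 𝓜) (h : DFStepVia d 𝓜 𝓜' ch) : Regular d 𝓜' := by
  obtain ⟨M₁, M₂, h₁, h₂, hch, hdch, rfl⟩ := h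
  have hd := (pairwise_iff_forall disjSymm).1 hreg.1
  have h₂' : M₂ ∈ 𝓜 := Multiset.mem_of_mem_erase h₂
  have htail : ∀ B ∈ (𝓜.erase M₁).erase M₂, Disjoint M₁ B ∧ Disjoint M₂ B := by
    intro B hB
    have hB1 : B ∈ 𝓜.erase M₁ := Multiset.mem_of_le (Multiset.erase_le _ _) hB
    have hB2 : B ∈ 𝓜.erase M₂ := by
      rw [Multiset.erase_comm] at hB
      exact Multiset.mem_of_le (Multiset.erase_le _ _) hB
    exact ⟨hd M₁ h₁ B hB1, hd M₂ h₂' B hB2⟩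
  have e𝓜 : 𝓜 = M₁ ::ₘ M₂ ::ₘ ((𝓜.erase M₁).erase M₂) := by
    rw [Multiset.cons_erase h₂, Multiset.cons_erase h₁]
  constructor
  · rw [pairwise_cons_iff disjSymm]
    constructor
    · intro B hB
      obtain ⟨hd1, hd2⟩ := htail B hB
      refine Finset.disjoint_left.2 fun a ha => ?_
      rcases Finset.mem_union.1 (Finset.mem_sdiff.1 ha).1 with h | h
      · exact Finset.disjoint_left.1 hd1 h
      · exact Finset.disjoint_left.1 hd2 h
    · exact pairwise_erase disjSymm (pairwise_erase disjSymm hreg.1 M₁) M₂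
  · have key : ∀ a : α, a ∈ (((M₁ ∪ M₂) \ {ch, d ch}) ::ₘ ((𝓜.erase M₁).erase M₂)).sup ↔
        (a ∈ 𝓜.sup ∧ a ≠ ch ∧ a ≠ d ch) := by
      intro a
      constructor
      · intro ha
        obtain ⟨M, hM, haM⟩ := mem_msup.1 ha
        rcases Multiset.mem_cons.1 hM with rfl | hM
        · obtain ⟨hu, hnotin⟩ := Finset.mem_sdiff.1 haM
          simp only [Finset.mem_insert, Finset.mem_singleton, not_or] at hnotin
          refine ⟨mem_msup.2 ?_, hnotin.1, hnotin.2⟩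
          rcases Finset.mem_union.1 hu with h | h
          · exact ⟨M₁, h₁, h⟩
          · exact ⟨M₂, h₂', h⟩
        · obtain ⟨hdj1, hdj2⟩ := htail M hM
          have hM𝓜 : M ∈ 𝓜 := Multiset.mem_of_mem_erase
            (Multiset.mem_of_le (Multiset.erase_le _ _) hM)
          refine ⟨mem_msup.2 ⟨M, hM𝓜, haM⟩, ?_, ?_⟩
          · exact fun e => Finset.disjoint_left.1 hdj1 hch (e ▸ haM)
          · exact fun e => Finset.disjoint_left.1 hdj2 hdch (e ▸ haM)
      · rintro ⟨ha, hn1, hn2⟩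
        obtain ⟨M, hM, haM⟩ := mem_msup.1 ha
        rw [e𝓜, Multiset.mem_cons, Multiset.mem_cons] at hM
        refine mem_msup.2 ?_
        rcases hM with rfl | rfl | hM
        · exact ⟨_, Multiset.mem_cons_self _ _, Finset.mem_sdiff.2
            ⟨Finset.mem_union_left _ haM, by simp [hn1, hn2]⟩⟩
        · exact ⟨_, Multiset.mem_cons_self _ _, Finset.mem_sdiff.2
            ⟨Finset.mem_union_right _ haM, by simp [hn1, hn2]⟩⟩
        · exact ⟨M, Multiset.mem_cons_of_mem hM, haM⟩
    intro c
    have e1 : c = ch ↔ d c = d ch := ⟨fun h => by rw [h], fun h => hinv.injective h⟩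
    have e2 : c = d ch ↔ d c = ch :=
      ⟨fun h => by rw [h, hinv], fun h => by rw [← h, hinv]⟩
    rw [key c, key (d c), hreg.2 c, ne_eq, ne_eq, ne_eq, ne_eq, e1, e2]
    tauto

lemma step_loop (hinv : Function.Involutive d) {𝓜 𝓜' : Multiset (Finset α)} {ch : α}
    (hd : ∀ A ∈ 𝓜, ∀ B ∈ 𝓜.erase A, Disjoint A B)
    (h : DFStepVia d 𝓜 𝓜' ch) (hl : HasLoop d 𝓜) : HasLoop d 𝓜' := by
  obtain ⟨M₁, M₂, h₁, h₂, hch, hdch, rfl⟩ := h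
  obtain ⟨c, M, hM, hc, hdc⟩ := hl
  have hdj : Disjoint M₁ M₂ := hd M₁ h₁ M₂ h₂
  by_cases e1 : M = M₁
  · subst e1
    have f1 : c ≠ ch := fun e => Finset.disjoint_left.1 hdj (by rw [← e]; exact hdc) hdch
    have f2 : c ≠ d ch := fun e => Finset.disjoint_left.1 hdj (e ▸ hc) hdch
    have f3 : d c ≠ ch := fun e => f2 (by rw [← e, hinv])
    have f4 : d c ≠ d ch := fun e => f1 (hinv.injective e)
    exact ⟨c, _, Multiset.mem_cons_self _ _,
      Finset.mem_sdiff.2 ⟨Finset.mem_union_left _ hc, by simp [f1, f2]⟩,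
      Finset.mem_sdiff.2 ⟨Finset.mem_union_left _ hdc, by simp [f3, f4]⟩⟩
  · by_cases e2 : M = M₂
    · subst e2
      have f1 : c ≠ ch := fun e => Finset.disjoint_left.1 hdj hch (e ▸ hc)
      have f2 : c ≠ d ch := fun e =>
        Finset.disjoint_left.1 hdj hch (by rw [← hinv ch, ← e]; exact hdc)
      have f3 : d c ≠ ch := fun e => Finset.disjoint_left.1 hdj hch (e ▸ hdc)
      have f4 : d c ≠ d ch := fun e => f1 (hinv.injective e)
      exact ⟨c, _, Multiset.mem_cons_self _ _,
        Finset.mem_sdiff.2 ⟨Finset.mem_union_right _ hc, by simp [f1, f2]⟩,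
        Finset.mem_sdiff.2 ⟨Finset.mem_union_right _ hdc, by simp [f3, f4]⟩⟩
    · have hM' : M ∈ (𝓜.erase M₁).erase M₂ :=
        (Multiset.mem_erase_of_ne e2).2 ((Multiset.mem_erase_of_ne e1).2 hM)
      exact ⟨c, M, Multiset.mem_cons_of_mem hM', hc, hdc⟩

lemma loop_not_red (hinv : Function.Involutive d) :
    ∀ n (𝓜 : Multiset (Finset α)), Multiset.card 𝓜 = n →
      Regular d 𝓜 → HasLoop d 𝓜 → ¬ DFReducible d 𝓜 := by
  intro n
  induction n using Nat.strong_induction_on with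
  | _ n ih =>
    intro 𝓜 hcard hreg hl hred
    rw [DFReducible] at hred
    rcases hred with hall | ⟨⟨𝓜', ch, hst⟩, hrec⟩
    · obtain ⟨c, M, hM, hc, -⟩ := hl
      rw [hall M hM] at hc
      exact absurd hc (Finset.notMem_empty c)
    · have hd := (pairwise_iff_forall disjSymm).1 hreg.1
      exact ih (Multiset.card 𝓜') (hcard ▸ hst.card_lt) 𝓜' rfl
        (step_regular hinv hreg hst) (step_loop hinv hd hst hl) (hrec 𝓜' ch hst)

lemma diamond (hinv : Function.Involutive d) {𝓜 𝓜₁ 𝓜₂ : Multiset (Finset α)} {ch₁ ch₂ : α}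
    (hreg : Regular d 𝓜) (h₁ : DFStepVia d 𝓜 𝓜₁ ch₁) (h₂ : DFStepVia d 𝓜 𝓜₂ ch₂) :
    𝓜₁ = 𝓜₂ ∨ HasLoop d 𝓜₁ ∨
      ∃ 𝓝 c c', DFStepVia d 𝓜₁ 𝓝 c ∧ DFStepVia d 𝓜₂ 𝓝 c' := by
  have hd := (pairwise_iff_forall disjSymm).1 hreg.1
  obtain ⟨M₁, M₂, hM₁, hM₂, hc1, hd1, rfl⟩ := h₁
  obtain ⟨N₁, N₂, hN₁, hN₂, hc2, hd2, rfl⟩ := h₂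
  have hM₂' : M₂ ∈ 𝓜 := Multiset.mem_of_mem_erase hM₂
  have hdjM : Disjoint M₁ M₂ := hd M₁ hM₁ M₂ hM₂
  have hMne : M₁ ≠ M₂ := fun e => Finset.disjoint_left.1 hdjM hc1 (e ▸ hc1)
  by_cases e₁ : N₁ = M₁
  · replace e₁ := e₁.symm; subst e₁
    by_cases e₂ : N₂ = M₂
    · replace e₂ := e₂.symm; subst e₂
      by_cases e₃ : ch₂ = ch₁
      · subst e₃; left; rfl
      · right; left
        have g1 : ch₂ ≠ d ch₁ := fun e => Finset.disjoint_left.1 hdjM (e ▸ hc2) hd1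
        have g2 : d ch₂ ≠ ch₁ := fun e => Finset.disjoint_left.1 hdjM hc1 (e ▸ hd2)
        have g3 : d ch₂ ≠ d ch₁ := fun e => e₃ (hinv.injective e)
        exact ⟨ch₂, _, Multiset.mem_cons_self _ _,
          Finset.mem_sdiff.2 ⟨Finset.mem_union_left _ hc2, by simp [e₃, g1]⟩,
          Finset.mem_sdiff.2 ⟨Finset.mem_union_right _ hd2, by simp [g2, g3]⟩⟩
    · right; right
      have hN₂' : N₂ ∈ (𝓜.erase M₁).erase M₂ := (Multiset.mem_erase_of_ne e₂).2 hN₂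
      obtain ⟨𝓝, s₁, s₂⟩ := core3 (d := d) hd hM₁ hM₂ hN₂' hc1 hd1 hc2 hd2
      exact ⟨𝓝, ch₂, ch₁, s₁, s₂⟩
  · have hN₁e : N₁ ∈ 𝓜.erase M₁ := (Multiset.mem_erase_of_ne e₁).2 hN₁
    by_cases e₃ : N₁ = M₂
    · replace e₃ := e₃.symm; subst e₃
      by_cases e₄ : N₂ = M₁
      · replace e₄ := e₄.symm; subst e₄
        by_cases e₅ : ch₂ = d ch₁
        · left
          rw [e₅, hinv ch₁, Finset.union_comm M₂ M₁, Finset.pair_comm (d ch₁) ch₁,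
            Multiset.erase_comm 𝓜 M₂ M₁]
        · right; left
          have g1 : ch₂ ≠ ch₁ := fun e => Finset.disjoint_left.1 hdjM hc1 (e ▸ hc2)
          have g2 : d ch₂ ≠ ch₁ := fun e => e₅ (by rw [← e, hinv])
          have g3 : d ch₂ ≠ d ch₁ := fun e => g1 (hinv.injective e)
          exact ⟨ch₂, _, Multiset.mem_cons_self _ _,
            Finset.mem_sdiff.2 ⟨Finset.mem_union_right _ hc2, by simp [g1, e₅]⟩,
            Finset.mem_sdiff.2 ⟨Finset.mem_union_left _ hd2, by simp [g2, g3]⟩⟩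
      · right; right
        have hB : M₁ ∈ 𝓜.erase M₂ := (Multiset.mem_erase_of_ne hMne).2 hM₁
        have hC : N₂ ∈ (𝓜.erase M₂).erase M₁ := (Multiset.mem_erase_of_ne e₄).2 hN₂
        have hy : d (d ch₁) ∈ M₁ := by rw [hinv]; exact hc1
        obtain ⟨𝓝, s₁, s₂⟩ := core3 (d := d) hd hM₂' hB hC hd1 hy hc2 hd2
        refine ⟨𝓝, ch₂, d ch₁, ?_, s₂⟩
        have eP : ((M₂ ∪ M₁) \ {d ch₁, d (d ch₁)}) ::ₘ (𝓜.erase M₂).erase M₁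
            = ((M₁ ∪ M₂) \ {ch₁, d ch₁}) ::ₘ (𝓜.erase M₁).erase M₂ := by
          rw [hinv ch₁, Finset.union_comm M₂ M₁, Finset.pair_comm (d ch₁) ch₁,
            Multiset.erase_comm 𝓜 M₂ M₁]
        rwa [eP] at s₁
    · have hN₁R : N₁ ∈ (𝓜.erase M₁).erase M₂ := (Multiset.mem_erase_of_ne e₃).2 hN₁e
      by_cases e₅ : N₂ = M₁
      · replace e₅ := e₅.symm; subst e₅
        right; right
        have hw : d (d ch₂) ∈ N₁ := by rw [hinv]; exact hc2
        obtain ⟨𝓝, s₁, s₂⟩ := core3 (d := d) hd hM₁ hM₂ hN₁R hc1 hd1 hd2 hw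
        refine ⟨𝓝, d ch₂, ch₁, s₁, ?_⟩
        have eQ : ((M₁ ∪ N₁) \ {d ch₂, d (d ch₂)}) ::ₘ (𝓜.erase M₁).erase N₁
            = ((N₁ ∪ M₁) \ {ch₂, d ch₂}) ::ₘ (𝓜.erase N₁).erase M₁ := by
          rw [hinv ch₂, Finset.union_comm M₁ N₁, Finset.pair_comm (d ch₂) ch₂,
            Multiset.erase_comm 𝓜 M₁ N₁]
        rwa [eQ] at s₂
      · by_cases e₆ : N₂ = M₂
        · replace e₆ := e₆.symm; subst e₆
          right; right
          have hB : M₁ ∈ 𝓜.erase M₂ := (Multiset.mem_erase_of_ne hMne).2 hM₁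
          have hC : N₁ ∈ (𝓜.erase M₂).erase M₁ := by
            rw [Multiset.erase_comm]; exact hN₁R
          have hy : d (d ch₁) ∈ M₁ := by rw [hinv]; exact hc1
          have hw : d (d ch₂) ∈ N₁ := by rw [hinv]; exact hc2
          obtain ⟨𝓝, s₁, s₂⟩ := core3 (d := d) hd hM₂' hB hC hd1 hy hd2 hw
          refine ⟨𝓝, d ch₂, d ch₁, ?_, ?_⟩
          · have eP : ((M₂ ∪ M₁) \ {d ch₁, d (d ch₁)}) ::ₘ (𝓜.erase M₂).erase M₁
                = ((M₁ ∪ M₂) \ {ch₁, d ch₁}) ::ₘ (𝓜.erase M₁).erase M₂ := by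
              rw [hinv ch₁, Finset.union_comm M₂ M₁, Finset.pair_comm (d ch₁) ch₁,
                Multiset.erase_comm 𝓜 M₂ M₁]
            rwa [eP] at s₁
          · have eQ : ((M₂ ∪ N₁) \ {d ch₂, d (d ch₂)}) ::ₘ (𝓜.erase M₂).erase N₁
                = ((N₁ ∪ M₂) \ {ch₂, d ch₂}) ::ₘ (𝓜.erase N₁).erase M₂ := by
              rw [hinv ch₂, Finset.union_comm M₂ N₁, Finset.pair_comm (d ch₂) ch₂,
                Multiset.erase_comm 𝓜 M₂ N₁]
            rwa [eQ] at s₂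
        · right; right
          have hD : N₂ ∈ ((𝓜.erase M₁).erase M₂).erase N₁ := by
            have t2 : N₂ ∈ ((𝓜.erase N₁).erase M₁) := (Multiset.mem_erase_of_ne e₅).2 hN₂
            have t3 : N₂ ∈ (((𝓜.erase N₁).erase M₁).erase M₂) :=
              (Multiset.mem_erase_of_ne e₆).2 t2
            rw [Multiset.erase_comm 𝓜 N₁ M₁, Multiset.erase_comm (𝓜.erase M₁) N₁ M₂] at t3
            exact t3
          obtain ⟨𝓝, s₁, s₂⟩ := core4 (d := d) hd hM₁ hM₂ hN₁R hD hc1 hd1 hc2 hd2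
          exact ⟨𝓝, ch₂, ch₁, s₁, s₂⟩

lemma main_aux (hinv : Function.Involutive d) :
    ∀ n (𝓜 : Multiset (Finset α)), Multiset.card 𝓜 = n → Regular d 𝓜 →
      ∀ 𝓜' ch, DFStepVia d 𝓜 𝓜' ch → DFReducible d 𝓜' → DFReducible d 𝓜 := by
  intro n
  induction n using Nat.strong_induction_on with
  | _ n ih =>
    intro 𝓜 hcard hreg 𝓜' ch₁ hst hred
    rw [DFReducible]
    refine Or.inr ⟨⟨𝓜', ch₁, hst⟩, ?_⟩
    intro 𝓜₂ ch₂ h₂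
    rcases diamond hinv hreg hst h₂ with heq | hl | ⟨𝓝, c, c', s₁, s₂⟩
    · exact heq ▸ hred
    · exact absurd hred
        (loop_not_red hinv (Multiset.card 𝓜') 𝓜' rfl (step_regular hinv hreg hst) hl)
    · have h𝓝 : DFReducible d 𝓝 := by
        rw [DFReducible] at hred
        rcases hred with hall | ⟨-, hrec⟩
        · obtain ⟨A, B, hA, -, hcA, -, -⟩ := s₁
          rw [hall A hA] at hcA
          exact absurd hcA (Finset.notMem_empty c)
        · exact hrec 𝓝 c s₁
      exact ih (Multiset.card 𝓜₂) (hcard ▸ h₂.card_lt) 𝓜₂ rfl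
        (step_regular hinv hreg h₂) 𝓝 c' s₂ h𝓝

end DFAux

/-- If a regular collection `𝓜` DF-reduces to some DF-reducible collection
`𝓜'`, then `𝓜` itself is DF-reducible. -/
theorem DFReducible.of_step {α : Type*} [DecidableEq α] (d : α → α)
    (hinv : Function.Involutive d) (hfpf : ∀ ch : α, d ch ≠ ch)
    (𝓜 𝓜' : Multiset (Finset α)) (hne : 𝓜 ≠ 0) (hreg : Regular d 𝓜)
    (hstep : ∃ ch : α, DFStepVia d 𝓜 𝓜' ch) (hred : DFReducible d 𝓜') :
    DFReducible d 𝓜 := by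
  obtain ⟨ch, hst⟩ := hstep
  exact DFAux.main_aux hinv (Multiset.card 𝓜) 𝓜 rfl hreg 𝓜' ch hst hred
end

section
/- Let 𝓜 be a regular collection consisting of n channel sets M₁, …, Mₙ for some n ≥ 1. If the union M₁ ∪ … ∪ Mₙ contains at least n channel pairs — that is, there exist channels ch₁, …, chₙ such that the 2n channels ch₁, d ch₁, …, chₙ, d chₙ are pairwise distinct and all belong to the union — then 𝓜 is not DF-reducible. -/
/-! A DF step replaces two members by one and removes from the union of the members only the
channels `ch` and `d ch`. Hence `2 * card 𝓜 ≤ #𝓜.sup` is preserved by every step, whereas a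
nonempty collection of empty sets violates it. -/

open Finset

section

variable {α : Type*} [DecidableEq α] {d : α → α}

theorem DFStepVia.sup_sdiff_subset {𝓜 𝓜' : Multiset (Finset α)} {ch : α}
    (h : DFStepVia d 𝓜 𝓜' ch) : 𝓜.sup \ {ch, d ch} ⊆ 𝓜'.sup := by
  obtain ⟨M₁, M₂, h₁, h₂, -, -, rfl⟩ := h
  have h𝓜 : 𝓜 = M₁ ::ₘ M₂ ::ₘ (𝓜.erase M₁).erase M₂ := by
    rw [Multiset.cons_erase h₂, Multiset.cons_erase h₁]
  intro x hx
  rw [h𝓜] at hx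
  simp only [Multiset.sup_cons, sup_eq_union, mem_sdiff, mem_union] at hx ⊢
  tauto

theorem DFStepVia.card_sup_le {𝓜 𝓜' : Multiset (Finset α)} {ch : α}
    (h : DFStepVia d 𝓜 𝓜' ch) : #𝓜.sup ≤ #𝓜'.sup + 2 :=
  calc #𝓜.sup ≤ #(𝓜.sup \ {ch, d ch}) + #{ch, d ch} := card_le_card_sdiff_add_card
    _ ≤ #𝓜'.sup + 2 := add_le_add (card_le_card h.sup_sdiff_subset) card_le_two

theorem DFStepVia.ne_zero {𝓜 𝓜' : Multiset (Finset α)} {ch : α}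
    (h : DFStepVia d 𝓜 𝓜' ch) : 𝓜' ≠ 0 := by
  obtain ⟨M₁, M₂, -, -, -, -, rfl⟩ := h
  exact Multiset.cons_ne_zero

theorem not_DFReducible_of_two_mul_card_le {𝓜 : Multiset (Finset α)} (hne : 𝓜 ≠ 0)
    (hcard : 2 * Multiset.card 𝓜 ≤ #𝓜.sup) : ¬ DFReducible d 𝓜 := by
  rw [DFReducible]
  rintro (hempty | ⟨⟨𝓜', ch, hstep⟩, hreducible⟩)
  · have hsup : 𝓜.sup = ∅ := le_bot_iff.1 (Multiset.sup_le.2 fun M hM => (hempty M hM).le)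
    have hpos : 0 < Multiset.card 𝓜 := Multiset.card_pos.2 hne
    rw [hsup, card_empty] at hcard
    omega
  · have hlt := hstep.card_lt
    have hsup := hstep.card_sup_le
    exact not_DFReducible_of_two_mul_card_le hstep.ne_zero (by omega) (hreducible 𝓜' ch hstep)
termination_by Multiset.card 𝓜
decreasing_by exact hstep.card_lt

end

theorem not_DFReducible_of_pairs_general {α : Type*} [DecidableEq α] (d : α → α)
    (𝓜 : Multiset (Finset α)) (n : ℕ) (hn : 1 ≤ n)
    (hcard : Multiset.card 𝓜 = n)
    (chs : Fin n → α)
    (hinj : Function.Injective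
      (Sum.elim chs (fun i => d (chs i)) : Fin n ⊕ Fin n → α))
    (hmem : ∀ i : Fin n, chs i ∈ 𝓜.sup ∧ d (chs i) ∈ 𝓜.sup) :
    ¬ DFReducible d 𝓜 := by
  have hmaps : ∀ x ∈ (univ : Finset (Fin n ⊕ Fin n)),
      Sum.elim chs (fun i => d (chs i)) x ∈ 𝓜.sup := by
    rintro (i | i) -
    exacts [(hmem i).1, (hmem i).2]
  have hpairs : 2 * n ≤ #𝓜.sup := by
    simpa [two_mul] using card_le_card_of_injOn _ hmaps hinj.injOn
  have hne : 𝓜 ≠ 0 := Multiset.card_pos.1 (by omega)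
  exact not_DFReducible_of_two_mul_card_le hne (hcard ▸ hpairs)

/-- If a regular collection of `n ≥ 1` channel sets is such that the union of
its member sets contains at least `n` channel pairs (i.e., there are channels
`ch₁, …, chₙ` such that the `2n` channels `ch₁, d ch₁, …, chₙ, d chₙ` are
pairwise distinct and all belong to the union), then the collection is not
DF-reducible. -/
theorem not_DFReducible_of_pairs {α : Type*} [DecidableEq α] (d : α → α)
    (hinv : Function.Involutive d) (hfpf : ∀ ch : α, d ch ≠ ch)
    (𝓜 : Multiset (Finset α)) (n : ℕ) (hn : 1 ≤ n)
    (hcard : Multiset.card 𝓜 = n) (hreg : Regular d 𝓜)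
    (chs : Fin n → α)
    (hinj : Function.Injective
      (Sum.elim chs (fun i => d (chs i)) : Fin n ⊕ Fin n → α))
    (hmem : ∀ i : Fin n, chs i ∈ 𝓜.sup ∧ d (chs i) ∈ 𝓜.sup) :
    ¬ DFReducible d 𝓜 :=
  not_DFReducible_of_pairs_general d 𝓜 n hn hcard chs hinj hmem
end
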